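/- arXiv:1201.3731 — 5 statements merged into one kernel-verified Lean document; each statement's English description precedes it below -/
import Mathlib

section
/- Weak Rolle: if a < b and P(a) = 0 and P(b) = 0 for a polynomial P over a real closed field, then there exists c in the open interval (a,b) such that P'(c) = 0 or P(c) = 0. -/
open Polynomial

/-- A discrete real closed field: an ordered field in which the intermediate
value property holds for polynomials. -/
class RealClosedFieldIVT (R : Type*) [Field R] [LinearOrder R] [IsStrictOrderedRing R] : Prop where
  ivt : ∀ (p : Polynomial R) (a b : R), a ≤ b → p.eval a ≤ 0 → 0 ≤ p.eval b →
    ∃ x ∈ Set.Icc a b, p.eval x = 0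

/-! If neither `P` nor `P'` vanished on `(a, b)`, the intermediate value property would force
`P * P'` to have constant sign there. But at a root `r` of multiplicity `k`,
`P * P' = (X - r) ^ (2k - 1) * Q` with `Q(r) = k * (P / (X - r) ^ k)(r) ^ 2 > 0`, so `P * P'` is
negative just left of the root `b` and positive just right of the root `a`. -/

open Set Filter Topology

namespace Polynomial

section OrderedField

variable {R : Type*} [Field R] [LinearOrder R] [IsStrictOrderedRing R]

theorem exists_mem_Ioo_eval_pos_of_eval_right_pos (f : R[X]) {a b : R} (hab : a < b)
    (hb : 0 < f.eval b) : ∃ x ∈ Ioo a b, 0 < f.eval x := by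
  -- `R` carries no topology; in its order topology polynomials are continuous.
  let _ : TopologicalSpace R := Preorder.topology R
  have _ : OrderTopology R := ⟨rfl⟩
  have hpos : ∀ᶠ x in 𝓝[<] b, 0 < f.eval x :=
    nhdsWithin_le_nhds (f.continuous.continuousAt.eventually (lt_mem_nhds hb))
  exact nonempty_of_mem (inter_mem (Ioo_mem_nhdsLT hab) hpos)

theorem exists_mem_Ioo_eval_pos_of_eval_left_pos (f : R[X]) {a b : R} (hab : a < b)
    (ha : 0 < f.eval a) : ∃ x ∈ Ioo a b, 0 < f.eval x := by
  let _ : TopologicalSpace R := Preorder.topology R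
  have _ : OrderTopology R := ⟨rfl⟩
  have hpos : ∀ᶠ x in 𝓝[>] a, 0 < f.eval x :=
    nhdsWithin_le_nhds (f.continuous.continuousAt.eventually (lt_mem_nhds ha))
  exact nonempty_of_mem (inter_mem (Ioo_mem_nhdsGT hab) hpos)

theorem exists_mul_derivative_eq_pow_mul {P : R[X]} (hP : P ≠ 0) {r : R} (hr : P.IsRoot r) :
    ∃ m : ℕ, ∃ Q : R[X], P * derivative P = (X - C r) ^ (2 * m + 1) * Q ∧ 0 < Q.eval r := by
  set q := P /ₘ (X - C r) ^ P.rootMultiplicity r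
  have hq : q.eval r ≠ 0 := eval_divByMonic_pow_rootMultiplicity_ne_zero r hP
  obtain ⟨m, hm⟩ := Nat.exists_eq_add_one.2 ((rootMultiplicity_pos hP).2 hr)
  have hPq : P = (X - C r) ^ (m + 1) * q := by
    rw [← hm]; exact (pow_mul_divByMonic_rootMultiplicity_eq P r).symm
  refine ⟨m, q * (C ((m : R) + 1) * q + (X - C r) * derivative q), ?_, ?_⟩
  · rw [hPq, derivative_mul, derivative_X_sub_C_pow]
    simp only [Nat.cast_add, Nat.cast_one, add_tsub_cancel_right, map_add, map_natCast, map_one]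
    ring
  · simp only [eval_mul, eval_add, eval_C, eval_sub, eval_X, sub_self, zero_mul, add_zero]
    rw [mul_left_comm]
    exact mul_pos (by positivity) (mul_self_pos.2 hq)

theorem exists_mem_Ioo_eval_mul_derivative_neg {P : R[X]} (hP : P ≠ 0) {a b : R} (hab : a < b)
    (hb : P.IsRoot b) : ∃ x ∈ Ioo a b, (P * derivative P).eval x < 0 := by
  obtain ⟨m, Q, hPQ, hQ⟩ := exists_mul_derivative_eq_pow_mul hP hb
  obtain ⟨x, hx, hQx⟩ := Q.exists_mem_Ioo_eval_pos_of_eval_right_pos hab hQ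
  refine ⟨x, hx, ?_⟩
  have : (x - b) ^ (2 * m + 1) < 0 := (odd_two_mul_add_one m).pow_neg (sub_neg.2 hx.2)
  rw [hPQ, eval_mul, eval_pow, eval_sub, eval_X, eval_C]
  exact mul_neg_of_neg_of_pos this hQx

theorem exists_mem_Ioo_eval_mul_derivative_pos {P : R[X]} (hP : P ≠ 0) {a b : R} (hab : a < b)
    (ha : P.IsRoot a) : ∃ x ∈ Ioo a b, 0 < (P * derivative P).eval x := by
  obtain ⟨m, Q, hPQ, hQ⟩ := exists_mul_derivative_eq_pow_mul hP ha
  obtain ⟨x, hx, hQx⟩ := Q.exists_mem_Ioo_eval_pos_of_eval_left_pos hab hQ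
  refine ⟨x, hx, ?_⟩
  rw [hPQ, eval_mul, eval_pow, eval_sub, eval_X, eval_C]
  exact mul_pos (pow_pos (sub_pos.2 hx.1) _) hQx

end OrderedField

end Polynomial

theorem RealClosedFieldIVT.exists_mem_uIcc_eval_eq_zero {R : Type*} [Field R] [LinearOrder R]
    [IsStrictOrderedRing R] [RealClosedFieldIVT R] (f : R[X]) {x y : R} (hx : f.eval x ≤ 0)
    (hy : 0 ≤ f.eval y) : ∃ z ∈ uIcc x y, f.eval z = 0 := by
  rcases le_total x y with hxy | hyx
  · simpa [uIcc_of_le hxy] using ivt f x y hxy hx hy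
  · simpa [uIcc_of_ge hyx] using ivt (-f) y x hyx (by simpa using hy) (by simpa using hx)

/-- Weak Rolle: between two roots of `P` there is a root of `P'` or of `P`. -/
theorem rolle_weak {R : Type*} [Field R] [LinearOrder R] [IsStrictOrderedRing R] [RealClosedFieldIVT R]
    (P : Polynomial R) (a b : R) (hab : a < b)
    (ha : P.eval a = 0) (hb : P.eval b = 0) :
    ∃ c ∈ Set.Ioo a b, (Polynomial.derivative P).eval c = 0 ∨ P.eval c = 0 := by
  by_contra! h
  have hP : P ≠ 0 := by
    rintro rfl
    obtain ⟨c, hc⟩ := exists_between hab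
    exact (h c hc).2 eval_zero
  obtain ⟨x, hx, hneg⟩ := exists_mem_Ioo_eval_mul_derivative_neg hP hab hb
  obtain ⟨y, hy, hpos⟩ := exists_mem_Ioo_eval_mul_derivative_pos hP hab ha
  obtain ⟨z, hz, hz0⟩ := RealClosedFieldIVT.exists_mem_uIcc_eval_eq_zero _ hneg.le hpos.le
  have hzab : z ∈ Ioo a b := ordConnected_Ioo.uIcc_subset hx hy hz
  rw [eval_mul, mul_eq_zero] at hz0
  exact hz0.elim (h z hzab).2 (h z hzab).1
end

section
/- Rolle's theorem for polynomials: if a < b and P(a) = P(b), then there exists c in the open interval (a,b) with P'(c) = 0. -/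
/-!
Subtracting the constant `P a` reduces to the case `P a = P b = 0`, and replacing `b` by the least
root of `P` in `(a, b]` to the case where `P` has no root strictly between `a` and `b`. Write
`P = (X - a)^(m+1) (X - b)^(n+1) S` with `S a, S b ≠ 0`; then `S` has no root on `[a, b]`, so by the
intermediate value property `S a` and `S b` have the same sign. Now
`P' = (X - a)^m (X - b)^n T` with `T = (m+1)(X - b) S + (n+1)(X - a) S + (X - a)(X - b) S'`, and
`T a = (m+1)(a - b) S a`, `T b = (n+1)(b - a) S b` have opposite signs, so `T` (hence `P'`) has a
root in `(a, b)`.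
-/

open Polynomial

namespace Polynomial

theorem exists_eq_X_sub_C_pow_mul_X_sub_C_pow_mul {R : Type*} [CommRing R] [IsDomain R]
    {p : R[X]} (hp : p ≠ 0) {a b : R} (hab : a ≠ b) (ha : p.IsRoot a) (hb : p.IsRoot b) :
    ∃ (m n : ℕ) (s : R[X]), p = (X - C a) ^ (m + 1) * (X - C b) ^ (n + 1) * s ∧
      s.eval a ≠ 0 ∧ s.eval b ≠ 0 := by
  set q := p /ₘ (X - C a) ^ rootMultiplicity a p
  have hp_eq : p = (X - C a) ^ rootMultiplicity a p * q :=
    (pow_mul_divByMonic_rootMultiplicity_eq p a).symm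
  have hqa : q.eval a ≠ 0 := eval_divByMonic_pow_rootMultiplicity_ne_zero a hp
  have hq : q ≠ 0 := fun h => hqa (by rw [h, eval_zero])
  have hqb : q.IsRoot b := by
    have := hb
    rw [hp_eq, IsRoot, eval_mul, eval_pow, eval_sub, eval_X, eval_C] at this
    exact (mul_eq_zero.mp this).resolve_left (pow_ne_zero _ (sub_ne_zero.mpr hab.symm))
  set s := q /ₘ (X - C b) ^ rootMultiplicity b q
  have hq_eq : q = (X - C b) ^ rootMultiplicity b q * s :=
    (pow_mul_divByMonic_rootMultiplicity_eq q b).symm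
  obtain ⟨m, hm⟩ := Nat.exists_eq_add_one.mpr ((rootMultiplicity_pos hp).mpr ha)
  obtain ⟨n, hn⟩ := Nat.exists_eq_add_one.mpr ((rootMultiplicity_pos hq).mpr hqb)
  refine ⟨m, n, s, ?_, fun hsa => hqa ?_, eval_divByMonic_pow_rootMultiplicity_ne_zero b hq⟩
  · rw [← hm, ← hn, mul_assoc, ← hq_eq, ← hp_eq]
  · rw [hq_eq, eval_mul, hsa, mul_zero]

theorem derivative_X_sub_C_pow_succ_mul_X_sub_C_pow_succ_mul {R : Type*} [CommRing R]
    (a b : R) (m n : ℕ) (s : R[X]) :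
    derivative ((X - C a) ^ (m + 1) * (X - C b) ^ (n + 1) * s) =
      (X - C a) ^ m * (X - C b) ^ n *
        (C ((m + 1 : ℕ) : R) * (X - C b) * s + C ((n + 1 : ℕ) : R) * (X - C a) * s +
          (X - C a) * (X - C b) * derivative s) := by
  simp only [derivative_mul, derivative_pow, derivative_X_sub_C, Nat.add_sub_cancel]
  ring

theorem exists_isRoot_Ioc_forall_Ioo_not_isRoot {R : Type*} [CommRing R] [IsDomain R]
    [LinearOrder R] {p : R[X]} (hp : p ≠ 0) {a b : R} (hab : a < b) (hb : p.IsRoot b) :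
    ∃ b' ∈ Set.Ioc a b, p.IsRoot b' ∧ ∀ x ∈ Set.Ioo a b', ¬p.IsRoot x := by
  obtain ⟨b', ⟨hb'_mem, hb'_root⟩, hb'_min⟩ :=
    Set.exists_min_image {x | x ∈ Set.Ioc a b ∧ p.IsRoot x} id
      ((finite_setOfPred_isRoot hp).subset fun _ hx => hx.2) ⟨b, ⟨hab, le_rfl⟩, hb⟩
  refine ⟨b', hb'_mem, hb'_root, fun x hx hx_root => ?_⟩
  exact (hb'_min x ⟨⟨hx.1, hx.2.le.trans hb'_mem.2⟩, hx_root⟩).not_gt hx.2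

end Polynomial

namespace RealClosedFieldIVT

variable {R : Type*} [Field R] [LinearOrder R] [IsStrictOrderedRing R] [RealClosedFieldIVT R]

theorem exists_isRoot_of_mul_eval_nonpos (p : R[X]) {a b : R} (hab : a ≤ b)
    (h : p.eval a * p.eval b ≤ 0) : ∃ x ∈ Set.Icc a b, p.IsRoot x := by
  rcases lt_trichotomy (p.eval a) 0 with ha | ha | ha
  · exact ivt p a b hab ha.le (nonneg_of_mul_nonpos_right h ha)
  · exact ⟨a, ⟨le_rfl, hab⟩, ha⟩
  · obtain ⟨x, hx, hx_root⟩ :=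
      ivt (-p) a b hab (by simpa using ha.le) (by simpa using nonpos_of_mul_nonpos_right h ha)
    exact ⟨x, hx, by simpa using hx_root⟩

theorem mul_eval_pos_of_forall_not_isRoot (p : R[X]) {a b : R} (hab : a ≤ b)
    (hp : ∀ x ∈ Set.Icc a b, ¬p.IsRoot x) : 0 < p.eval a * p.eval b := by
  by_contra! h
  obtain ⟨x, hx, hx_root⟩ := exists_isRoot_of_mul_eval_nonpos p hab h
  exact hp x hx hx_root

theorem exists_isRoot_derivative_of_consecutive_roots {p : R[X]} (hp : p ≠ 0) {a b : R}
    (hab : a < b) (ha : p.IsRoot a) (hb : p.IsRoot b) (hgap : ∀ x ∈ Set.Ioo a b, ¬p.IsRoot x) :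
    ∃ c ∈ Set.Ioo a b, (derivative p).IsRoot c := by
  obtain ⟨m, n, s, rfl, hsa, hsb⟩ := exists_eq_X_sub_C_pow_mul_X_sub_C_pow_mul hp hab.ne ha hb
  have hs : ∀ x ∈ Set.Icc a b, ¬s.IsRoot x := by
    rintro x ⟨hax, hxb⟩ hx
    rcases hax.eq_or_lt with rfl | hax
    · exact hsa hx
    rcases hxb.eq_or_lt with rfl | hxb
    · exact hsb hx
    exact hgap x ⟨hax, hxb⟩ (by simp [hx.eq_zero])
  rw [derivative_X_sub_C_pow_succ_mul_X_sub_C_pow_succ_mul]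
  set t : R[X] := C ((m + 1 : ℕ) : R) * (X - C b) * s + C ((n + 1 : ℕ) : R) * (X - C a) * s +
    (X - C a) * (X - C b) * derivative s
  have ht : t.eval a * t.eval b = -(((m + 1 : ℕ) : R) * ((n + 1 : ℕ) : R) * (b - a) ^ 2) *
      (s.eval a * s.eval b) := by
    simp only [t, eval_add, eval_mul, eval_C, eval_sub, eval_X, sub_self]
    ring
  have ht_neg : t.eval a * t.eval b < 0 := by
    rw [ht]
    exact mul_neg_of_neg_of_pos (neg_neg_of_pos (by have := sub_pos.mpr hab; positivity))
      (mul_eval_pos_of_forall_not_isRoot s hab.le hs)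
  obtain ⟨c, ⟨hac, hcb⟩, hc_root⟩ := exists_isRoot_of_mul_eval_nonpos t hab.le ht_neg.le
  have hc_ne (x : R) (hx : t.IsRoot x) : x ≠ a ∧ x ≠ b := by
    constructor <;> rintro rfl <;> simp [hx.eq_zero] at ht_neg
  refine ⟨c, ⟨hac.lt_of_ne (hc_ne c hc_root).1.symm, hcb.lt_of_ne (hc_ne c hc_root).2⟩, ?_⟩
  simp [hc_root.eq_zero]

end RealClosedFieldIVT

/-- Rolle's theorem for polynomials over a real closed field. -/
theorem poly_rolle {R : Type*} [Field R] [LinearOrder R] [IsStrictOrderedRing R] [RealClosedFieldIVT R]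
    (P : Polynomial R) (a b : R) (hab : a < b) (hP : P.eval a = P.eval b) :
    ∃ c ∈ Set.Ioo a b, (Polynomial.derivative P).eval c = 0 := by
  set Q := P - C (P.eval a)
  have hQ' : derivative Q = derivative P := by simp [Q]
  rcases eq_or_ne Q 0 with hQ | hQ
  · refine ⟨(a + b) / 2, ⟨by linarith, by linarith⟩, ?_⟩
    rw [← hQ', hQ, derivative_zero, eval_zero]
  obtain ⟨b', hb', hb'_root, hgap⟩ :=
    exists_isRoot_Ioc_forall_Ioo_not_isRoot hQ hab (by simp [Q, hP])
  obtain ⟨c, hc, hc_root⟩ := RealClosedFieldIVT.exists_isRoot_derivative_of_consecutive_roots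
    hQ hb'.1 (by simp [Q]) hb'_root hgap
  exact ⟨c, ⟨hc.1, hc.2.trans_le hb'.2⟩, hQ' ▸ hc_root⟩
end

section
/- Sign at the right of a point: for a polynomial P over a real closed field and a point x, there exists δ > 0 such that for all y with x < y < x + δ, sign(P(y)) equals the sign at x of the first successive derivative of P that does not vanish at x (and is 0 if all derivatives of P vanish at x, i.e., P = 0). -/
open Polynomial

variable {R : Type*} [Field R] [LinearOrder R] [IsStrictOrderedRing R]

/-- Auxiliary fuelled recursion for the sign at the right of a point:
the sign at `x` of the first successive derivative of `p` not vanishing at `x`. -/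
noncomputable def sgpRightAux : ℕ → Polynomial R → R → SignType
  | 0, _, _ => 0
  | (n + 1), p, x =>
    if p = 0 then 0
    else if p.eval x ≠ 0 then SignType.sign (p.eval x)
    else sgpRightAux n (Polynomial.derivative p) x

/-- The sign of `p` immediately to the right of `x`: `sign (p.eval x)` if
`p.eval x ≠ 0`, `0` if `p = 0`, and otherwise the right-sign of `p'` at `x`.
(The fuel `p.natDegree + 1` suffices to unfold this recursion completely.) -/
noncomputable def sgpRight (p : Polynomial R) (x : R) : SignType :=
  sgpRightAux (p.natDegree + 1) p x

/-!
Write `P = (X - x) ^ m * Q` with `m` the multiplicity of the root `x` of `P`, so that `Q(x) ≠ 0`.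
The derivatives `P^(j)`, `j < m`, vanish at `x` and `P^(m)(x) = m! • Q(x)`, so the sign at the
right of `x` is `sign Q(x)`. For `y > x` the factor `(y - x) ^ m` is positive, and by continuity
of `Q` for the order topology `Q(y)` has the sign of `Q(x)` when `y` is close to `x`.
-/

open Filter Topology

theorem natDegree_derivative_lt_of_isRoot {S : Type*} [Semiring S] {p : S[X]} {a : S} (hp : p ≠ 0)
    (h : p.IsRoot a) : (derivative p).natDegree < p.natDegree :=
  natDegree_derivative_lt (natDegree_pos_iff_degree_pos.mpr (degree_pos_of_root hp h)).ne'

section SignAtRight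

variable {K : Type*} [Field K] [LinearOrder K] {p : K[X]} {x : K}

@[simp]
theorem sgpRight_zero (x : K) : sgpRight (0 : K[X]) x = 0 := by
  simp [sgpRight, sgpRightAux]

theorem sgpRight_of_eval_ne_zero (h : p.eval x ≠ 0) :
    sgpRight p x = SignType.sign (p.eval x) := by
  have hp : p ≠ 0 := by rintro rfl; simp at h
  simp [sgpRight, sgpRightAux, hp, h]

theorem sgpRightAux_eq_sgpRight {n : ℕ} (hn : p.natDegree < n) :
    sgpRightAux n p x = sgpRight p x := by
  induction n using Nat.strong_induction_on generalizing p with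
  | _ n ih =>
  obtain _ | n := n
  · omega
  by_cases hp : p = 0
  · simp [hp, sgpRightAux]
  by_cases hx : p.IsRoot x
  · have hdeg := natDegree_derivative_lt_of_isRoot hp hx
    simp only [sgpRight, sgpRightAux, hp, hx.eq_zero, if_false, ne_eq, not_true]
    rw [ih n (by omega) (by omega), ih p.natDegree (by omega) hdeg]
  · simp [sgpRight, sgpRightAux, hp, IsRoot.def.not.mp hx]

theorem sgpRight_of_isRoot (hp : p ≠ 0) (h : p.IsRoot x) :
    sgpRight p x = sgpRight (derivative p) x := by
  conv_lhs => simp only [sgpRight, sgpRightAux, hp, h.eq_zero, if_false, ne_eq, not_true]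
  exact sgpRightAux_eq_sgpRight (natDegree_derivative_lt_of_isRoot hp h)

theorem sgpRight_eq_sign_eval_iterate_derivative {k : ℕ}
    (hroot : ∀ j < k, (derivative^[j] p).IsRoot x) (hk : (derivative^[k] p).eval x ≠ 0) :
    sgpRight p x = SignType.sign ((derivative^[k] p).eval x) := by
  induction k generalizing p with
  | zero => exact sgpRight_of_eval_ne_zero hk
  | succ k ih =>
    have hp : p ≠ 0 := by rintro rfl; simp at hk
    rw [sgpRight_of_isRoot hp (hroot 0 k.succ_pos), ih (fun j hj ↦ hroot (j + 1) (by omega)) hk,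
      Function.iterate_succ_apply]

theorem sgpRight_eq_sign_eval_divByMonic [IsStrictOrderedRing K] (hp : p ≠ 0) :
    sgpRight p x = SignType.sign ((p /ₘ (X - C x) ^ p.rootMultiplicity x).eval x) := by
  have hfact : (0 : K) < (p.rootMultiplicity x).factorial := mod_cast Nat.factorial_pos _
  have hm : (derivative^[p.rootMultiplicity x] p).eval x
      = (p.rootMultiplicity x).factorial * (p /ₘ (X - C x) ^ p.rootMultiplicity x).eval x := by
    rw [eval_iterate_derivative_rootMultiplicity, nsmul_eq_mul]
  have hne : (derivative^[p.rootMultiplicity x] p).eval x ≠ 0 := by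
    rw [hm]
    exact mul_ne_zero hfact.ne' (eval_divByMonic_pow_rootMultiplicity_ne_zero x hp)
  rw [sgpRight_eq_sign_eval_iterate_derivative
    (fun _ ↦ isRoot_iterate_derivative_of_lt_rootMultiplicity) hne, hm, sign_mul, sign_pos hfact,
    one_mul]

end SignAtRight

section OrderTopology

variable {K : Type*} [Field K] [LinearOrder K] [IsStrictOrderedRing K] [TopologicalSpace K]
  [OrderTopology K]

theorem eventually_sign_eval_eq (q : K[X]) {x : K} (hq : q.eval x ≠ 0) :
    ∀ᶠ y in 𝓝 x, SignType.sign (q.eval y) = SignType.sign (q.eval x) := by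
  have hcont : ContinuousAt (fun y ↦ SignType.sign (q.eval y)) x :=
    (continuousAt_sign_of_ne_zero hq).comp (f := fun y ↦ q.eval y) q.continuousAt
  rw [ContinuousAt, nhds_discrete SignType, tendsto_pure] at hcont
  exact hcont

theorem eventually_sign_eval_eq_sgpRight (p : K[X]) (x : K) :
    ∀ᶠ y in 𝓝[>] x, SignType.sign (p.eval y) = sgpRight p x := by
  by_cases hp : p = 0
  · simp [hp]
  set q := p /ₘ (X - C x) ^ p.rootMultiplicity x
  have hq := eventually_sign_eval_eq q (eval_divByMonic_pow_rootMultiplicity_ne_zero x hp)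
  filter_upwards [self_mem_nhdsWithin, nhdsWithin_le_nhds hq] with y (hy : x < y) hqy
  conv_lhs => rw [← pow_mul_divByMonic_rootMultiplicity_eq p x]
  rw [sgpRight_eq_sign_eval_divByMonic hp, eval_mul, sign_mul, hqy, eval_pow, eval_sub, eval_X,
    eval_C, sign_pow, sign_pos (sub_pos.mpr hy), one_pow, one_mul]

end OrderTopology

theorem sgr_neighpr_general (P : Polynomial R) (x : R) :
    ∃ δ : R, 0 < δ ∧ ∀ y : R, x < y → y < x + δ →
      SignType.sign (P.eval y) = sgpRight P x := by
  let _ := Preorder.topology R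
  have : OrderTopology R := ⟨rfl⟩
  obtain ⟨u, hxu : x < u, hsub⟩ :=
    mem_nhdsGT_iff_exists_Ioo_subset.mp (eventually_sign_eval_eq_sgpRight P x)
  exact ⟨u - x, sub_pos.mpr hxu, fun y hxy hyu ↦ hsub ⟨hxy, by linarith⟩⟩

/-- On a small interval at the right of `x`, the sign of `P` is constantly the
sign at `x` of the first successive derivative of `P` not vanishing at `x`. -/
theorem sgr_neighpr [RealClosedFieldIVT R] (P : Polynomial R) (x : R) :
    ∃ δ : R, 0 < δ ∧ ∀ y : R, x < y → y < x + δ →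
      SignType.sign (P.eval y) = sgpRight P x :=
  sgr_neighpr_general P x
end

section
/- The jump of Q·P'/P at a root x of P equals the sign of Q(x): for P a nonzero polynomial with P(x)=0 and Q any polynomial, jump(Q·P', P, x) = sign(Q(x)), where jump(A, B, x) is defined to be 0 if A = 0 or μ_x(B) − μ_x(A) is nonpositive or even, and otherwise equals the sign of A·B immediately to the right of x. -/
open Polynomial

variable {R : Type*} [Field R] [LinearOrder R] [IsStrictOrderedRing R]

/-- The jump of the rational fraction `A / B` at `x` : it is `0` unless `A ≠ 0`
and `μ_x(B) - μ_x(A)` is positive and odd, in which case it is the sign of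
`A * B` immediately to the right of `x`. -/
noncomputable def jump (A B : Polynomial R) (x : R) : ℤ :=
  let d : ℤ := (B.rootMultiplicity x : ℤ) - (A.rootMultiplicity x : ℤ)
  if A = 0 ∨ d ≤ 0 ∨ Even d then 0 else ((sgpRight (A * B) x : SignType) : ℤ)

/-!
Write `P = (X - x) ^ (m + 1) * g` with `g x ≠ 0`. Then `P' = (X - x) ^ m * h` with
`h x = (m + 1) * g x`, so for `Q x ≠ 0` the multiplicities of `Q * P'` and `P` at `x` differ by
exactly one, and `Q * P' * P = (X - x) ^ (2 * m + 1) * (Q * h * g)` has, to the right of `x`,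
the sign of `Q x * (m + 1) * (g x) ^ 2`, i.e. of `Q x`. If `Q x = 0` the multiplicity of
`Q * P'` is at least that of `P` and the jump vanishes.
-/

lemma X_sub_C_pow_mul_ne_zero {K : Type*} [CommRing K] [IsDomain K] {g : K[X]} {x : K}
    (hg : g.eval x ≠ 0) (n : ℕ) :
    (X - C x) ^ n * g ≠ 0 :=
  mul_ne_zero (pow_ne_zero _ (X_sub_C_ne_zero x)) (by rintro rfl; simp at hg)

lemma rootMultiplicity_X_sub_C_pow_mul {K : Type*} [CommRing K] {g : K[X]} {x : K}
    (hg : g.eval x ≠ 0) (n : ℕ) :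
    ((X - C x) ^ n * g).rootMultiplicity x = n := by
  rw [mul_comm, rootMultiplicity_mul_X_sub_C_pow (by rintro rfl; simp at hg),
    rootMultiplicity_eq_zero hg, zero_add]

lemma exists_eq_X_sub_C_pow_succ_mul {K : Type*} [CommRing K] [IsDomain K] {P : K[X]} {x : K}
    (hP : P ≠ 0) (hx : P.eval x = 0) :
    ∃ (m : ℕ) (g : K[X]), g.eval x ≠ 0 ∧ P = (X - C x) ^ (m + 1) * g := by
  obtain ⟨m, hm⟩ := Nat.exists_eq_add_one.2 ((rootMultiplicity_pos hP).2 hx)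
  refine ⟨m, _, eval_divByMonic_pow_rootMultiplicity_ne_zero x hP, ?_⟩
  rw [← hm, pow_mul_divByMonic_rootMultiplicity_eq]

lemma derivative_X_sub_C_pow_succ_mul {K : Type*} [CommRing K] (g : K[X]) (x : K) (m : ℕ) :
    derivative ((X - C x) ^ (m + 1) * g) =
      (X - C x) ^ m * (((m + 1 : ℕ) : K[X]) * g + (X - C x) * derivative g) := by
  rw [derivative_mul, derivative_X_sub_C_pow, Nat.add_sub_cancel, C_eq_natCast]
  ring

lemma sgpRightAux_eq_sign_eval_iterate_derivative {p : R[X]} {x : R} {n : ℕ} (hp : p ≠ 0)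
    (hn : p.natDegree < n) :
    sgpRightAux n p x = SignType.sign ((derivative^[p.rootMultiplicity x] p).eval x) := by
  induction n generalizing p with
  | zero => omega
  | succ n ih =>
    rw [sgpRightAux, if_neg hp]
    by_cases hpx : p.eval x = 0
    · have hdeg : p.natDegree ≠ 0 := fun h => hp (by
        rw [eq_C_of_natDegree_eq_zero h] at hpx ⊢; simp_all)
      have hμ : 0 < p.rootMultiplicity x := (rootMultiplicity_pos hp).2 hpx
      rw [if_neg (not_not.2 hpx),
        ih (derivative_ne_zero.2 hdeg) ((natDegree_derivative_lt hdeg).trans_le (by omega)),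
        derivative_rootMultiplicity_of_root hpx, ← Function.iterate_succ_apply,
        Nat.succ_eq_add_one, Nat.sub_add_cancel hμ]
    · rw [if_pos hpx, rootMultiplicity_eq_zero hpx, Function.iterate_zero_apply]

lemma sgpRight_X_sub_C_pow_mul {g : R[X]} {x : R} (hg : g.eval x ≠ 0) (n : ℕ) :
    sgpRight ((X - C x) ^ n * g) x = SignType.sign (g.eval x) := by
  have key := eval_iterate_derivative_rootMultiplicity (p := (X - C x) ^ n * g) (t := x)
  rw [rootMultiplicity_X_sub_C_pow_mul hg,
    mul_divByMonic_cancel_left _ ((monic_X_sub_C x).pow n)] at key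
  rw [sgpRight,
    sgpRightAux_eq_sign_eval_iterate_derivative (X_sub_C_pow_mul_ne_zero hg n) (Nat.lt_succ_self _),
    rootMultiplicity_X_sub_C_pow_mul hg, key, nsmul_eq_mul, sign_mul,
    sign_pos (by positivity : (0 : R) < n.factorial), one_mul]

lemma jump_eq_zero_of_rootMultiplicity_le {K : Type*} [Field K] [LinearOrder K] {A B : K[X]} {x : K}
    (h : B.rootMultiplicity x ≤ A.rootMultiplicity x) : jump A B x = 0 := by
  rw [jump, if_pos (Or.inr (Or.inl (by omega)))]

lemma jump_of_rootMultiplicity_eq_succ {K : Type*} [Field K] [LinearOrder K] {A B : K[X]} {x : K}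
    (hA : A ≠ 0) (h : B.rootMultiplicity x = A.rootMultiplicity x + 1) :
    jump A B x = sgpRight (A * B) x := by
  have hd : (B.rootMultiplicity x : ℤ) - A.rootMultiplicity x = 1 := by omega
  rw [jump, hd, if_neg (by simp [hA])]

theorem jump_mul_deriv_general (P Q : Polynomial R) (x : R)
    (hP : P ≠ 0) (hx : P.eval x = 0) :
    jump (Q * Polynomial.derivative P) P x = ((SignType.sign (Q.eval x) : SignType) : ℤ) := by
  obtain ⟨m, g, hgx, hPg⟩ := exists_eq_X_sub_C_pow_succ_mul hP hx
  set h := ((m + 1 : ℕ) : R[X]) * g + (X - C x) * derivative g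
  have hhx : h.eval x = (m + 1 : ℕ) * g.eval x := by simp [h]
  have hhx0 : h.eval x ≠ 0 := by rw [hhx]; exact mul_ne_zero (by positivity) hgx
  have hP' : derivative P = (X - C x) ^ m * h := by rw [hPg, derivative_X_sub_C_pow_succ_mul]
  by_cases hQ : Q = 0
  · simp [hQ, jump]
  have hQP' : Q * derivative P ≠ 0 := mul_ne_zero hQ (hP' ▸ X_sub_C_pow_mul_ne_zero hhx0 m)
  have hμP : P.rootMultiplicity x = m + 1 := by rw [hPg, rootMultiplicity_X_sub_C_pow_mul hgx]
  have hμ : (Q * derivative P).rootMultiplicity x = Q.rootMultiplicity x + m := by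
    rw [rootMultiplicity_mul hQP', hP', rootMultiplicity_X_sub_C_pow_mul hhx0]
  by_cases hQx : Q.eval x = 0
  · rw [jump_eq_zero_of_rootMultiplicity_le, hQx, sign_zero, SignType.coe_zero]
    have := (rootMultiplicity_pos hQ).2 hQx
    omega
  have hfac : Q * derivative P * P = (X - C x) ^ (m + (m + 1)) * (Q * h * g) := by
    rw [hP', hPg]; ring
  rw [jump_of_rootMultiplicity_eq_succ hQP' (by rw [hμ, rootMultiplicity_eq_zero hQx]; omega),
    hfac, sgpRight_X_sub_C_pow_mul (by simp [hQx, hhx0, hgx]), eval_mul, eval_mul, hhx,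
    mul_assoc, mul_assoc (_ : R), sign_mul,
    sign_pos (mul_pos (by positivity) (mul_self_pos.2 hgx)), mul_one]

/-- The jump of `Q * P' / P` at a root `x` of `P` is exactly the sign of `Q x`. -/
theorem jump_mul_deriv [RealClosedFieldIVT R] (P Q : Polynomial R) (x : R)
    (hP : P ≠ 0) (hx : P.eval x = 0) :
    jump (Q * Polynomial.derivative P) P x = ((SignType.sign (Q.eval x) : SignType) : ℤ) :=
  jump_mul_deriv_general P Q x hP hx
end

section
/- The 3×3 matrix M with rows (1,1,1), (−1,1,1), (0,0,1) has determinant 2 and is therefore invertible over any field of characteristic not 2; consequently the vector (#{x∈z: Q(x)>0}, #{x∈z: Q(x)<0}, #{x∈z: Q(x)=0}) is uniquely determined by the Tarski queries (Σ sign Q(x), Σ sign Q(x)², Σ 1) via the linear relation (taq Q, taq Q², taq 1) = (c₊, c₋, c₀) · M. -/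
/-!
At a point `x`, the signs of `Q(x)`, `Q(x)²` and `1` are `s`, `s²` and `1`, where `s` is the
sign of `Q(x)`; so `x` contributes the row of `M` indexed by `s` to `(taq Q, taq Q², taq 1)`,
and summing over `z` gives `(c₊, c₋, c₀) · M`. Since `det M = 2` is a nonzero integer,
`v ↦ v · M` is injective on `ℤ³`, and `M` becomes invertible over any field in which `2 ≠ 0`.
-/

open Polynomial Matrix

theorem List.sum_map_comp_sign {α β : Type*} [Zero β] [LinearOrder β]
    (φ : SignType → ℤ) (f : α → β) (z : List α) :
    (z.map fun x => φ (SignType.sign (f x))).sum =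
      φ 1 * (z.filter fun x => 0 < f x).length + φ (-1) * (z.filter fun x => f x < 0).length +
        φ 0 * (z.filter fun x => f x = 0).length := by
  induction z with
  | nil => simp
  | cons a z ih =>
    rw [List.map_cons, List.sum_cons, ih]
    rcases lt_trichotomy (f a) 0 with h | h | h
    · simp [h, h.ne, h.not_gt, sign_neg h]; ring
    · simp [h]; ring
    · simp [h, h.ne', h.not_gt, sign_pos h]; ring

def ctmat1 : Matrix (Fin 3) (Fin 3) ℤ := !![1, 1, 1; -1, 1, 1; 0, 0, 1]

theorem ctmat1_det : ctmat1.det = 2 := by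
  simp [ctmat1, det_fin_three]

theorem isUnit_det_map_ctmat1 {F : Type*} [Field F] (h2 : (2 : F) ≠ 0) :
    IsUnit (ctmat1.map (Int.cast : ℤ → F)).det := by
  rw [← Int.cast_det, ctmat1_det, Int.cast_ofNat]
  exact h2.isUnit

theorem vecMul_ctmat1 (v : Fin 3 → ℤ) :
    v ᵥ* ctmat1 = ![v 0 - v 1, v 0 + v 1, v 0 + v 1 + v 2] := by
  ext i
  fin_cases i <;> simp [ctmat1, vecMul, dotProduct, Fin.sum_univ_three, sub_eq_add_neg]

theorem vecMul_ctmat1_injective : Function.Injective fun v : Fin 3 → ℤ => v ᵥ* ctmat1 :=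
  fun v w hvw => sub_eq_zero.mp <|
    eq_zero_of_vecMul_eq_zero (M := ctmat1) (by simp [ctmat1_det]) <| by
      rw [sub_vecMul]
      exact sub_eq_zero.mpr hvw

section TarskiQuery

variable {R : Type*} [Semiring R] [LinearOrder R] (z : List R)

def taq (P : R[X]) : ℤ :=
  (z.map fun x => ((SignType.sign (P.eval x) : SignType) : ℤ)).sum

def signCounts (Q : R[X]) : Fin 3 → ℤ :=
  ![((z.filter fun x => 0 < Q.eval x).length : ℤ),
    ((z.filter fun x => Q.eval x < 0).length : ℤ),
    ((z.filter fun x => Q.eval x = 0).length : ℤ)]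

theorem taq_eq_of_sign_eval_eq {P Q : R[X]} (φ : SignType → ℤ)
    (h : ∀ x, ((SignType.sign (P.eval x) : SignType) : ℤ) = φ (SignType.sign (Q.eval x))) :
    taq z P = φ 1 * signCounts z Q 0 + φ (-1) * signCounts z Q 1 + φ 0 * signCounts z Q 2 := by
  simp only [taq, h, List.sum_map_comp_sign, signCounts]
  rfl

theorem taq_vector_eq_vecMul_ctmat1 {R : Type*} [CommRing R] [LinearOrder R]
    [IsStrictOrderedRing R] (z : List R) (Q : R[X]) :
    ![taq z Q, taq z (Q ^ 2), taq z 1] = signCounts z Q ᵥ* ctmat1 := by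
  have hQ := taq_eq_of_sign_eval_eq z (Q := Q) (fun s => s) fun _ => rfl
  have hQ2 := taq_eq_of_sign_eval_eq z (P := Q ^ 2) (Q := Q) (fun s => (s : ℤ) ^ 2) fun _ => by
    rw [eval_pow, sign_pow, SignType.coe_pow]
  have h1 := taq_eq_of_sign_eval_eq z (P := 1) (Q := Q) (fun _ => 1) fun _ => by
    rw [eval_one, sign_one, SignType.coe_one]
  rw [vecMul_ctmat1, hQ, hQ2, h1]
  norm_num [sub_eq_add_neg]

end TarskiQuery

/-- The matrix `ctmat1` has determinant `2`, is invertible over any field of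
characteristic different from `2`, and the counting vector
`(c₊, c₋, c₀)` of a polynomial `Q` over a list `z` of points is uniquely
determined by the Tarski queries `(taq Q, taq Q², taq 1)` through the linear
relation `(taq Q, taq Q², taq 1) = (c₊, c₋, c₀) · ctmat1`. -/
theorem ctmat1_relation {R : Type*} [Field R] [LinearOrder R] [IsStrictOrderedRing R]
    (z : List R) (Q : Polynomial R)
    (M : Matrix (Fin 3) (Fin 3) ℤ)
    (hM : M = !![1, 1, 1; -1, 1, 1; 0, 0, 1])
    (taq : Polynomial R → ℤ)
    (htaq : ∀ P : Polynomial R,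
      taq P = (z.map (fun x => ((SignType.sign (P.eval x) : SignType) : ℤ))).sum)
    (c : Fin 3 → ℤ)
    (hc : c = ![((z.filter (fun x => 0 < Q.eval x)).length : ℤ),
                ((z.filter (fun x => Q.eval x < 0)).length : ℤ),
                ((z.filter (fun x => Q.eval x = 0)).length : ℤ)]) :
    M.det = 2 ∧
    (∀ (F : Type) [Field F], (2 : F) ≠ 0 → IsUnit (M.map (Int.cast : ℤ → F)).det) ∧
    ![taq Q, taq (Q ^ 2), taq 1] = c ᵥ* M ∧
    (∀ c' : Fin 3 → ℤ, ![taq Q, taq (Q ^ 2), taq 1] = c' ᵥ* M → c' = c) := by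
  obtain rfl : M = ctmat1 := hM
  obtain rfl : taq = _root_.taq z := funext htaq
  obtain rfl : c = signCounts z Q := hc
  have hrel := taq_vector_eq_vecMul_ctmat1 z Q
  exact ⟨ctmat1_det, fun F _ => isUnit_det_map_ctmat1, hrel,
    fun c' hc' => vecMul_ctmat1_injective (hc'.symm.trans hrel)⟩
end
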